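/- arXiv:2106.05274 — 2 statements merged into one kernel-verified Lean document; each statement's English description precedes it below -/
import Mathlib

section
/- Let d ≥ 1, let 1 ≤ m ≤ d, and let α and β be ℤ₂-cochains on the d-dimensional hypercube. Then δ(α ∪_m β) = (δα) ∪_m β + α ∪_m (δβ) + α ∪_{m−1} β + β ∪_{m−1} α, as an equality of ℤ₂-cochains. -/
/-- The three possible entries of a cell label of the hypercube:
`dot` = `•` (a spanned direction), `pls` = `+`, `mns` = `−`. -/
inductive Sgn : Type
  | dot : Sgn
  | pls : Sgn
  | mns : Sgn
  deriving DecidableEq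

instance : Fintype Sgn where
  elems := {Sgn.dot, Sgn.pls, Sgn.mns}
  complete := fun x => by cases x <;> simp

/-- A cell of the `d`-dimensional hypercube, labeled by a tuple in `{•,+,−}^d`. -/
abbrev Cell (d : ℕ) := Fin d → Sgn

/-- A `ℤ₂`-cochain on the `d`-dimensional hypercube. -/
abbrev Cochain (d : ℕ) := Cell d → ZMod 2

/-- The top cell `(•,…,•)`. -/
def topCell (d : ℕ) : Cell d := fun _ => Sgn.dot

/-- The set of coordinates of a cell labeled `•`. -/
def dots {d : ℕ} (w : Cell d) : Finset (Fin d) :=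
  Finset.univ.filter (fun j => w j = Sgn.dot)

/-- The coboundary of a `ℤ₂`-cochain: `(δα)(w)` is the sum of `α` over all cells obtained
from `w` by replacing exactly one entry equal to `•` by `+` or by `−`. -/
def delta {d : ℕ} (α : Cochain d) : Cochain d := fun w =>
  ∑ j ∈ dots w, (α (Function.update w j Sgn.pls) + α (Function.update w j Sgn.mns))

/-- The set of coordinates where both `z` and `z'` are `•`. -/
def bothDot {d : ℕ} (z z' : Cell d) : Finset (Fin d) :=
  Finset.univ.filter (fun j => z j = Sgn.dot ∧ z' j = Sgn.dot)

/-- The allowed values of `(z_j, z'_j)` at a coordinate `j` not in the common-`•` set `I`: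
`(+,•)` or `(•,−)` when `ℓ(j) = #{i ∈ I : i < j}` is even, and `(−,•)` or `(•,+)` when it
is odd. -/
def pairCond {d : ℕ} (I : Finset (Fin d)) (j : Fin d) (a b : Sgn) : Prop :=
  if (I.filter (fun i => i < j)).card % 2 = 0 then
    (a = Sgn.pls ∧ b = Sgn.dot) ∨ (a = Sgn.dot ∧ b = Sgn.mns)
  else
    (a = Sgn.mns ∧ b = Sgn.dot) ∨ (a = Sgn.dot ∧ b = Sgn.pls)

/-- The pairs `(z,z')` appearing in the `m`-th higher cup product evaluated on the cell `w`:
the entries of `w` equal to `+` or `−` are fixed in both arguments, there are exactly `m`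
coordinates where both `z` and `z'` are `•`, and at the remaining `•`-coordinates of `w`
the parity condition `pairCond` holds. -/
def IntPair {d : ℕ} (m : ℕ) (w z z' : Cell d) : Prop :=
  (∀ j, w j ≠ Sgn.dot → z j = w j ∧ z' j = w j) ∧
    (bothDot z z').card = m ∧
    ∀ j, w j = Sgn.dot → j ∉ bothDot z z' → pairCond (bothDot z z') j (z j) (z' j)

open Classical in
/-- The finite set of pairs in `Int_m` relative to the cell `w`. -/
noncomputable def intPairs {d : ℕ} (m : ℕ) (w : Cell d) : Finset (Cell d × Cell d) :=
  Finset.univ.filter (fun p => IntPair m w p.1 p.2)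

/-- The higher cup product `α ∪_m β` of `ℤ₂`-cochains:
`(α ∪_m β)(w) = Σ_{(z,z') ∈ Int_m(w)} α(z)·β(z')`. -/
noncomputable def cup {d : ℕ} (m : ℕ) (α β : Cochain d) : Cochain d := fun w =>
  ∑ p ∈ intPairs m w, α p.1 * β p.2

/-!
Evaluated at a cell `w`, each of the five cochains in the identity is a sum
`Σ_{u,v} c(u,v) α(u) β(v)`; for the two terms with `δ` inside the cup product this comes from
moving `δ` across the sum, where it acts as `u ↦ Σ_j u[j:=•]` over the `±`-entries of `u`.
So the identity is one between `ℤ₂`-coefficients for each pair `(u,v)`. With `K` the common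
`•`-set of `u` and `v`, `IntPair m w u v` says `|K| = m` and a local condition holds at every
coordinate.
* If `|K| = m`, the four contributions of each coordinate `j` cancel, by a finite check at `j`.
* If `|K| = m - 1`, the terms with `δ` inside contribute at `j` exactly when `j` is a switch
  point: the local conditions of `(u,v)` hold before `j`, those of `(v,u)` after `j`, and exactly
  one of them at `j`. The number of switch points has the parity of
  `[(u,v) ∈ Int_{m-1}] + [(v,u) ∈ Int_{m-1}]`, which are the two `∪_{m-1}` terms.
* Otherwise every coefficient vanishes.
-/

open Finset Function

namespace HigherCup

open Classical in
noncomputable def ind (p : Prop) : ZMod 2 := if p then 1 else 0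

@[simp] lemma ind_true {p : Prop} (h : p) : ind p = 1 := if_pos h
@[simp] lemma ind_false {p : Prop} (h : ¬p) : ind p = 0 := if_neg h

lemma ind_and (p q : Prop) : ind (p ∧ q) = ind p * ind q := by
  by_cases hp : p <;> by_cases hq : q <;> simp [hp, hq]

lemma ind_mul (p : Prop) [Decidable p] (x : ZMod 2) : ind p * x = if p then x else 0 := by
  by_cases hp : p <;> simp [hp]

lemma switch_count_parity : ∀ (n : ℕ) (p q : Fin n → Prop),
    ind (∀ i, p i) + ind (∀ i, q i) +
      ∑ j, ind (Xor (p j) (q j) ∧ (∀ i < j, p i) ∧ ∀ i, j < i → q i) = 0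
  | 0, p, q => by simp; decide
  | n + 1, p, q => by
    have ih := switch_count_parity n (p ∘ Fin.succ) (q ∘ Fin.succ)
    simp only [Fin.sum_univ_succ, Fin.forall_fin_succ, Fin.succ_lt_succ_iff, Fin.succ_pos,
      Fin.not_lt_zero, Function.comp_apply, IsEmpty.forall_iff, implies_true, true_and] at ih ⊢
    by_cases hp : p 0 <;> by_cases hq : q 0 <;> simp [hp, hq] at ih ⊢
    exacts [ih, by rwa [← add_assoc], CharTwo.add_self_eq_zero _]

variable {d : ℕ}

/-- The constraint `IntPair` puts on coordinate `i` when `w i = c`, `u i = a`, `v i = b` and `K` is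
the common `•`-set of `u` and `v`. -/
def CoordOK (K : Finset (Fin d)) (i : Fin d) (c a b : Sgn) : Prop :=
  (c ≠ Sgn.dot → a = c ∧ b = c) ∧
    (c = Sgn.dot → (a = Sgn.dot ∧ b = Sgn.dot) ∨ pairCond K i a b)

lemma mem_bothDot {u v : Cell d} {i : Fin d} :
    i ∈ bothDot u v ↔ u i = Sgn.dot ∧ v i = Sgn.dot := by
  simp [bothDot]

lemma bothDot_comm (u v : Cell d) : bothDot v u = bothDot u v := by
  ext i; simp [mem_bothDot, and_comm]

lemma intPair_iff {m : ℕ} {w u v : Cell d} :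
    IntPair m w u v ↔
      (bothDot u v).card = m ∧ ∀ i, CoordOK (bothDot u v) i (w i) (u i) (v i) := by
  simp only [IntPair, CoordOK, mem_bothDot, forall_and, or_iff_not_imp_left]
  tauto

lemma intPair_iff_split {m : ℕ} {w u v w' u' v' : Cell d} (j : Fin d)
    (hw : ∀ i ≠ j, w' i = w i) (hu : ∀ i ≠ j, u' i = u i) (hv : ∀ i ≠ j, v' i = v i) :
    IntPair m w' u' v' ↔ (bothDot u' v').card = m ∧
      CoordOK (bothDot u' v') j (w' j) (u' j) (v' j) ∧
      ∀ i ≠ j, CoordOK (bothDot u' v') i (w i) (u i) (v i) := by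
  rw [intPair_iff]
  refine and_congr_right fun _ => ⟨fun h => ⟨h j, fun i hi => ?_⟩, fun ⟨hj, h⟩ i => ?_⟩
  · simpa only [hw i hi, hu i hi, hv i hi] using h i
  · by_cases hi : i = j
    · exact hi ▸ hj
    · simpa only [hw i hi, hu i hi, hv i hi] using h i hi

lemma bothDot_update_dot_left {u v : Cell d} {j : Fin d} (hv : v j ≠ Sgn.dot) :
    bothDot (update u j Sgn.dot) v = bothDot u v := by
  ext i
  by_cases hi : i = j
  · subst hi; simp [mem_bothDot, hv]
  · simp [mem_bothDot, hi]

lemma bothDot_update_dot_right {u v : Cell d} {j : Fin d} (hu : u j ≠ Sgn.dot) :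
    bothDot u (update v j Sgn.dot) = bothDot u v := by
  rw [bothDot_comm, bothDot_update_dot_left hu, bothDot_comm]

lemma bothDot_eq_insert {u v u' v' : Cell d} {j : Fin d} (hu : ∀ i ≠ j, u' i = u i)
    (hv : ∀ i ≠ j, v' i = v i) (hu' : u' j = Sgn.dot) (hv' : v' j = Sgn.dot) :
    bothDot u' v' = insert j (bothDot u v) := by
  ext i
  by_cases hi : i = j
  · subst hi; simp [mem_bothDot, hu', hv']
  · simp [mem_bothDot, hi, hu i hi, hv i hi]

/-- Inserting `j < i` into `K` flips the parity read by `pairCond` at `i`, and the two parity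
cases differ exactly by swapping `a` and `b`. -/
lemma pairCond_insert_of_lt {K : Finset (Fin d)} {i j : Fin d} (hj : j ∉ K) (hji : j < i)
    (a b : Sgn) : pairCond (insert j K) i a b ↔ pairCond K i b a := by
  have hcard : ((insert j K).filter (· < i)).card = (K.filter (· < i)).card + 1 := by
    rw [filter_insert, if_pos hji, card_insert_of_notMem (by simp [hj])]
  unfold pairCond
  rw [hcard]
  split_ifs <;> first | omega | tauto

lemma pairCond_insert_of_gt {K : Finset (Fin d)} {i j : Fin d} (hij : i < j) (a b : Sgn) :
    pairCond (insert j K) i a b ↔ pairCond K i a b := by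
  unfold pairCond
  rw [filter_insert, if_neg (not_lt.2 hij.le)]

lemma coordOK_insert_of_lt {K : Finset (Fin d)} {i j : Fin d} (hj : j ∉ K) (hji : j < i)
    (c a b : Sgn) : CoordOK (insert j K) i c a b ↔ CoordOK K i c b a := by
  simp only [CoordOK, pairCond_insert_of_lt hj hji]
  tauto

lemma coordOK_insert_of_gt {K : Finset (Fin d)} {i j : Fin d} (hij : i < j) (c a b : Sgn) :
    CoordOK (insert j K) i c a b ↔ CoordOK K i c a b := by
  simp only [CoordOK, pairCond_insert_of_gt hij]

lemma coordOK_dot_dot (K : Finset (Fin d)) (i : Fin d) (c : Sgn) :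
    CoordOK K i c Sgn.dot Sgn.dot ↔ c = Sgn.dot := by
  cases c <;> simp [CoordOK]

lemma coordOK_xor_swap (K : Finset (Fin d)) (i : Fin d) (c a b : Sgn) :
    Xor (CoordOK K i c a b) (CoordOK K i c b a) ↔
      c = Sgn.dot ∧ Xor (a = Sgn.dot) (b = Sgn.dot) := by
  by_cases h : (K.filter (· < i)).card % 2 = 0 <;>
    simp only [CoordOK, pairCond, h, if_true, if_false] <;>
    cases c <;> cases a <;> cases b <;> decide

lemma coordOK_cancel (K : Finset (Fin d)) (i : Fin d) (c a b : Sgn) :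
    ind (c = Sgn.dot ∧ CoordOK K i Sgn.pls a b) + ind (c = Sgn.dot ∧ CoordOK K i Sgn.mns a b) +
      ind (a ≠ Sgn.dot ∧ b ≠ Sgn.dot ∧ CoordOK K i c Sgn.dot b) +
      ind (a ≠ Sgn.dot ∧ b ≠ Sgn.dot ∧ CoordOK K i c a Sgn.dot) = 0 := by
  by_cases h : (K.filter (· < i)).card % 2 = 0 <;>
    simp only [CoordOK, pairCond, h, if_true, if_false] <;>
    cases c <;> cases a <;> cases b <;> simp <;> decide

section Characterizations

variable {m : ℕ} {w u v : Cell d} {j : Fin d}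

lemma intPair_update_cell_iff (s : Sgn) :
    IntPair m (update w j s) u v ↔ (bothDot u v).card = m ∧
      CoordOK (bothDot u v) j s (u j) (v j) ∧
      ∀ i ≠ j, CoordOK (bothDot u v) i (w i) (u i) (v i) := by
  rw [intPair_iff_split j (fun i hi => update_of_ne hi _ _) (fun _ _ => rfl) (fun _ _ => rfl),
    update_self]

lemma intPair_update_left_iff (hv : v j ≠ Sgn.dot) :
    IntPair m w (update u j Sgn.dot) v ↔ (bothDot u v).card = m ∧
      CoordOK (bothDot u v) j (w j) Sgn.dot (v j) ∧
      ∀ i ≠ j, CoordOK (bothDot u v) i (w i) (u i) (v i) := by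
  rw [intPair_iff_split j (fun _ _ => rfl) (fun i hi => update_of_ne hi _ _) (fun _ _ => rfl),
    bothDot_update_dot_left hv, update_self]

lemma intPair_update_right_iff (hu : u j ≠ Sgn.dot) :
    IntPair m w u (update v j Sgn.dot) ↔ (bothDot u v).card = m ∧
      CoordOK (bothDot u v) j (w j) (u j) Sgn.dot ∧
      ∀ i ≠ j, CoordOK (bothDot u v) i (w i) (u i) (v i) := by
  rw [intPair_iff_split j (fun _ _ => rfl) (fun _ _ => rfl) (fun i hi => update_of_ne hi _ _),
    bothDot_update_dot_right hu, update_self]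

lemma intPair_iff_of_insert {u' v' : Cell d} (hu : ∀ i ≠ j, u' i = u i)
    (hv : ∀ i ≠ j, v' i = v i) (hu' : u' j = Sgn.dot) (hv' : v' j = Sgn.dot)
    (hj : j ∉ bothDot u v) :
    IntPair m w u' v' ↔ (bothDot u v).card + 1 = m ∧ w j = Sgn.dot ∧
      (∀ i < j, CoordOK (bothDot u v) i (w i) (u i) (v i)) ∧
      ∀ i, j < i → CoordOK (bothDot u v) i (w i) (v i) (u i) := by
  rw [intPair_iff_split j (fun _ _ => rfl) hu hv, bothDot_eq_insert hu hv hu' hv',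
    card_insert_of_notMem hj, hu', hv', coordOK_dot_dot]
  refine and_congr_right fun _ => and_congr_right fun _ =>
    ⟨fun h => ⟨fun i hi => ?_, fun i hi => ?_⟩, fun ⟨hlt, hgt⟩ i hi => ?_⟩
  · exact (coordOK_insert_of_gt hi _ _ _).1 (h i hi.ne)
  · exact (coordOK_insert_of_lt hj hi _ _ _).1 (h i hi.ne')
  · rcases hi.lt_or_gt with hi | hi
    · exact (coordOK_insert_of_gt hi _ _ _).2 (hlt i hi)
    · exact (coordOK_insert_of_lt hj hi _ _ _).2 (hgt i hi)

lemma not_intPair_update_left_of_card_eq (hK : (bothDot u v).card = m) (hu : u j ≠ Sgn.dot)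
    (hv : v j = Sgn.dot) : ¬IntPair m w (update u j Sgn.dot) v := fun h => by
  have := (intPair_iff_of_insert (fun i hi => update_of_ne hi _ _) (fun _ _ => rfl)
    (update_self ..) hv (fun h => hu (mem_bothDot.1 h).1)).1 h
  omega

lemma not_intPair_update_right_of_card_eq (hK : (bothDot u v).card = m) (hu : u j = Sgn.dot)
    (hv : v j ≠ Sgn.dot) : ¬IntPair m w u (update v j Sgn.dot) := fun h => by
  have := (intPair_iff_of_insert (fun _ _ => rfl) (fun i hi => update_of_ne hi _ _)
    hu (update_self ..) (fun h => hv (mem_bothDot.1 h).2)).1 h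
  omega

lemma coeff_terms_cancel_of_card_eq (hK : (bothDot u v).card = m) :
    ind (w j = Sgn.dot ∧ IntPair m (update w j Sgn.pls) u v) +
      ind (w j = Sgn.dot ∧ IntPair m (update w j Sgn.mns) u v) +
      ind (u j ≠ Sgn.dot ∧ IntPair m w (update u j Sgn.dot) v) +
      ind (v j ≠ Sgn.dot ∧ IntPair m w u (update v j Sgn.dot)) = 0 := by
  set K := bothDot u v
  set R := ∀ i ≠ j, CoordOK K i (w i) (u i) (v i)
  have hL (s : Sgn) : (w j = Sgn.dot ∧ IntPair m (update w j s) u v) ↔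
      (w j = Sgn.dot ∧ CoordOK K j s (u j) (v j)) ∧ R := by
    rw [intPair_update_cell_iff]; tauto
  have hA : (u j ≠ Sgn.dot ∧ IntPair m w (update u j Sgn.dot) v) ↔
      (u j ≠ Sgn.dot ∧ v j ≠ Sgn.dot ∧ CoordOK K j (w j) Sgn.dot (v j)) ∧ R := by
    by_cases hv : v j = Sgn.dot
    · simp only [hv, ne_eq, not_true_eq_false, false_and, and_false, iff_false, not_and]
      exact fun hu => not_intPair_update_left_of_card_eq hK hu hv
    · rw [intPair_update_left_iff hv]; tauto
  have hB : (v j ≠ Sgn.dot ∧ IntPair m w u (update v j Sgn.dot)) ↔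
      (u j ≠ Sgn.dot ∧ v j ≠ Sgn.dot ∧ CoordOK K j (w j) (u j) Sgn.dot) ∧ R := by
    by_cases hu : u j = Sgn.dot
    · simp only [hu, ne_eq, not_true_eq_false, false_and, iff_false, not_and]
      exact fun hv => not_intPair_update_right_of_card_eq hK hu hv
    · rw [intPair_update_right_iff hu]; tauto
  rw [hL, hL, hA, hB]
  by_cases hR : R
  · simpa only [hR, and_true] using coordOK_cancel K j (w j) (u j) (v j)
  · simp only [hR, and_false, not_false_eq_true, ind_false, add_zero]

lemma coeff_terms_eq_of_card_succ_eq (hK : (bothDot u v).card + 1 = m) :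
    ind (u j ≠ Sgn.dot ∧ IntPair m w (update u j Sgn.dot) v) +
      ind (v j ≠ Sgn.dot ∧ IntPair m w u (update v j Sgn.dot)) =
    ind (Xor (CoordOK (bothDot u v) j (w j) (u j) (v j))
        (CoordOK (bothDot u v) j (w j) (v j) (u j)) ∧
      (∀ i < j, CoordOK (bothDot u v) i (w i) (u i) (v i)) ∧
      ∀ i, j < i → CoordOK (bothDot u v) i (w i) (v i) (u i)) := by
  have hA : (u j ≠ Sgn.dot ∧ IntPair m w (update u j Sgn.dot) v) ↔
      (u j ≠ Sgn.dot ∧ v j = Sgn.dot) ∧ w j = Sgn.dot ∧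
        (∀ i < j, CoordOK (bothDot u v) i (w i) (u i) (v i)) ∧
        ∀ i, j < i → CoordOK (bothDot u v) i (w i) (v i) (u i) := by
    by_cases hv : v j = Sgn.dot
    · by_cases hu : u j = Sgn.dot
      · simp [hu]
      · rw [intPair_iff_of_insert (fun i hi => update_of_ne hi _ _) (fun _ _ => rfl)
          (update_self ..) hv (fun h => hu (mem_bothDot.1 h).1)]
        simp [hu, hv, hK]
    · rw [intPair_update_left_iff hv]
      simp only [hv, and_false, false_and, iff_false]
      rintro ⟨-, hcard, -⟩
      omega
  have hB : (v j ≠ Sgn.dot ∧ IntPair m w u (update v j Sgn.dot)) ↔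
      (u j = Sgn.dot ∧ v j ≠ Sgn.dot) ∧ w j = Sgn.dot ∧
        (∀ i < j, CoordOK (bothDot u v) i (w i) (u i) (v i)) ∧
        ∀ i, j < i → CoordOK (bothDot u v) i (w i) (v i) (u i) := by
    by_cases hu : u j = Sgn.dot
    · by_cases hv : v j = Sgn.dot
      · simp [hv]
      · rw [intPair_iff_of_insert (fun _ _ => rfl) (fun i hi => update_of_ne hi _ _)
          hu (update_self ..) (fun h => hv (mem_bothDot.1 h).2)]
        simp [hu, hv, hK]
    · rw [intPair_update_right_iff hu]
      simp only [hu, false_and, iff_false]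
      rintro ⟨-, hcard, -⟩
      omega
  rw [hA, hB, coordOK_xor_swap]
  by_cases hu : u j = Sgn.dot <;> by_cases hv : v j = Sgn.dot <;> simp [hu, hv]

end Characterizations

noncomputable def coeffDeltaCup (m : ℕ) (w u v : Cell d) : ZMod 2 :=
  ∑ j, (ind (w j = Sgn.dot ∧ IntPair m (update w j Sgn.pls) u v) +
    ind (w j = Sgn.dot ∧ IntPair m (update w j Sgn.mns) u v))

noncomputable def coeffCupDeltaLeft (m : ℕ) (w u v : Cell d) : ZMod 2 :=
  ∑ j, ind (u j ≠ Sgn.dot ∧ IntPair m w (update u j Sgn.dot) v)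

noncomputable def coeffCupDeltaRight (m : ℕ) (w u v : Cell d) : ZMod 2 :=
  ∑ j, ind (v j ≠ Sgn.dot ∧ IntPair m w u (update v j Sgn.dot))

section Coefficients

variable {m : ℕ} {w u v : Cell d}

lemma coeffDeltaCup_eq_zero (hK : (bothDot u v).card ≠ m) : coeffDeltaCup m w u v = 0 :=
  sum_eq_zero fun j _ => by simp [intPair_update_cell_iff, hK]

lemma coeff_leibniz_of_card_eq (hK : (bothDot u v).card = m) :
    coeffDeltaCup m w u v = coeffCupDeltaLeft m w u v + coeffCupDeltaRight m w u v := by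
  rw [← sub_eq_zero, CharTwo.sub_eq_add, coeffDeltaCup, coeffCupDeltaLeft, coeffCupDeltaRight,
    ← sum_add_distrib, ← sum_add_distrib]
  exact sum_eq_zero fun j _ => by rw [← add_assoc]; exact coeff_terms_cancel_of_card_eq hK

lemma coeff_leibniz_of_card_succ_eq (hK : (bothDot u v).card + 1 = m) :
    coeffCupDeltaLeft m w u v + coeffCupDeltaRight m w u v +
      ind (IntPair (m - 1) w u v) + ind (IntPair (m - 1) w v u) = 0 := by
  have hK' : (bothDot u v).card = m - 1 := by omega
  rw [intPair_iff, intPair_iff, bothDot_comm u v, coeffCupDeltaLeft, coeffCupDeltaRight,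
    ← sum_add_distrib]
  simp only [coeff_terms_eq_of_card_succ_eq hK, hK', true_and]
  rw [add_assoc, add_comm]
  exact switch_count_parity d _ _

lemma coeffCupDeltaLeft_eq_zero (hK : (bothDot u v).card ≠ m)
    (hK' : (bothDot u v).card + 1 ≠ m) : coeffCupDeltaLeft m w u v = 0 := by
  refine sum_eq_zero fun j _ => ind_false fun ⟨hu, h⟩ => ?_
  by_cases hv : v j = Sgn.dot
  · exact hK' ((intPair_iff_of_insert (fun i hi => update_of_ne hi _ _) (fun _ _ => rfl)
      (update_self ..) hv (fun h => hu (mem_bothDot.1 h).1)).1 h).1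
  · exact hK ((intPair_update_left_iff hv).1 h).1

lemma coeffCupDeltaRight_eq_zero (hK : (bothDot u v).card ≠ m)
    (hK' : (bothDot u v).card + 1 ≠ m) : coeffCupDeltaRight m w u v = 0 := by
  refine sum_eq_zero fun j _ => ind_false fun ⟨hv, h⟩ => ?_
  by_cases hu : u j = Sgn.dot
  · exact hK' ((intPair_iff_of_insert (fun _ _ => rfl) (fun i hi => update_of_ne hi _ _)
      hu (update_self ..) (fun h => hv (mem_bothDot.1 h).2)).1 h).1
  · exact hK ((intPair_update_right_iff hu).1 h).1

lemma coeffDeltaCup_eq (hm : 1 ≤ m) :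
    coeffDeltaCup m w u v = coeffCupDeltaLeft m w u v + coeffCupDeltaRight m w u v +
      ind (IntPair (m - 1) w u v) + ind (IntPair (m - 1) w v u) := by
  have card_uv (h : IntPair (m - 1) w u v) : (bothDot u v).card + 1 = m := by
    have := (intPair_iff.1 h).1
    omega
  have card_vu (h : IntPair (m - 1) w v u) : (bothDot u v).card + 1 = m := by
    have := (intPair_iff.1 h).1
    rw [bothDot_comm] at this
    omega
  by_cases hK : (bothDot u v).card = m
  · rw [coeff_leibniz_of_card_eq hK, ind_false (fun h => by have := card_uv h; omega),
      ind_false (fun h => by have := card_vu h; omega), add_zero, add_zero]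
  rw [coeffDeltaCup_eq_zero hK]
  by_cases hK' : (bothDot u v).card + 1 = m
  · exact (coeff_leibniz_of_card_succ_eq hK').symm
  · rw [coeffCupDeltaLeft_eq_zero hK hK', coeffCupDeltaRight_eq_zero hK hK',
      ind_false (fun h => hK' (card_uv h)), ind_false (fun h => hK' (card_vu h))]
    simp

end Coefficients

lemma sum_ite_update_eq {ι β M : Type*} [Fintype ι] [DecidableEq ι] [Fintype β]
    [DecidableEq β] [AddCommMonoid M] (j : ι) (a b : β) (F : (ι → β) → (ι → β) → M) :
    ∑ z, (if z j = a then F z (update z j b) else 0) =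
      ∑ u, (if u j = b then F (update u j a) u else 0) := by
  rw [← sum_filter, ← sum_filter]
  refine sum_nbij' (update · j b) (update · j a) ?_ ?_ ?_ ?_ ?_ <;>
    intro z hz <;> simp only [mem_filter, mem_univ, true_and] at hz <;> simp [← hz]

lemma sum_mul_delta (G : Cell d → ZMod 2) (α : Cochain d) :
    ∑ z, G z * delta α z =
      ∑ u, (∑ j, ind (u j ≠ Sgn.dot) * G (update u j Sgn.dot)) * α u := by
  have reindex (j : Fin d) : ∑ z, G z *
      (if z j = Sgn.dot then α (update z j Sgn.pls) + α (update z j Sgn.mns) else 0) =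
      ∑ u, ind (u j ≠ Sgn.dot) * G (update u j Sgn.dot) * α u := by
    simp only [mul_ite, mul_zero, mul_add, ite_add_zero, sum_add_distrib]
    rw [sum_ite_update_eq j Sgn.dot Sgn.pls (fun z z' => G z * α z'),
      sum_ite_update_eq j Sgn.dot Sgn.mns (fun z z' => G z * α z'), ← sum_add_distrib]
    refine sum_congr rfl fun u _ => ?_
    cases u j <;> simp
  simp only [delta, dots, sum_filter, mul_sum]
  rw [sum_comm]
  simp only [reindex, sum_mul]
  exact sum_comm

section Expansions

variable (m : ℕ) (α β : Cochain d) (w : Cell d)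

lemma cup_apply_eq_sum :
    cup m α β w = ∑ u, ∑ v, ind (IntPair m w u v) * (α u * β v) := by
  classical
  simp only [cup, intPairs, sum_filter, Fintype.sum_prod_type, ind_mul]

lemma cup_swap_apply_eq_sum :
    cup m β α w = ∑ u, ∑ v, ind (IntPair m w v u) * (α u * β v) := by
  rw [cup_apply_eq_sum, sum_comm]
  simp only [mul_comm (β _)]

lemma delta_cup_apply_eq_sum :
    delta (cup m α β) w = ∑ u, ∑ v, coeffDeltaCup m w u v * (α u * β v) := by
  simp only [delta, dots, sum_filter, cup_apply_eq_sum, ← ind_mul, mul_sum,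
    coeffDeltaCup, ind_and, add_mul, sum_mul, sum_add_distrib, mul_assoc]
  congr 1 <;> rw [sum_comm] <;> exact sum_congr rfl fun _ _ => sum_comm

lemma cup_delta_left_apply_eq_sum :
    cup m (delta α) β w = ∑ u, ∑ v, coeffCupDeltaLeft m w u v * (α u * β v) := by
  have regroup (z v : Cell d) : ind (IntPair m w z v) * (delta α z * β v) =
      ind (IntPair m w z v) * β v * delta α z := by ring
  rw [cup_apply_eq_sum, sum_comm]
  simp only [regroup, sum_mul_delta]
  rw [sum_comm]
  refine sum_congr rfl fun u _ => sum_congr rfl fun v _ => ?_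
  simp only [coeffCupDeltaLeft, ind_and, sum_mul]
  exact sum_congr rfl fun j _ => by ring

lemma cup_delta_right_apply_eq_sum :
    cup m α (delta β) w = ∑ u, ∑ v, coeffCupDeltaRight m w u v * (α u * β v) := by
  rw [cup_apply_eq_sum]
  simp only [← mul_assoc, sum_mul_delta]
  refine sum_congr rfl fun u _ => sum_congr rfl fun v _ => ?_
  simp only [coeffCupDeltaRight, ind_and, sum_mul]

end Expansions

end HigherCup

theorem cup_higher_leibniz_general (d m : ℕ) (hm : 1 ≤ m) (α β : Cochain d) :
    delta (cup m α β) =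
      cup m (delta α) β + cup m α (delta β) + cup (m - 1) α β + cup (m - 1) β α := by
  open HigherCup in
  funext w
  rw [Pi.add_apply, Pi.add_apply, Pi.add_apply, delta_cup_apply_eq_sum,
    cup_delta_left_apply_eq_sum, cup_delta_right_apply_eq_sum, cup_apply_eq_sum,
    cup_swap_apply_eq_sum]
  simp only [coeffDeltaCup_eq hm, add_mul, sum_add_distrib]

/-- For `d ≥ 1`, `1 ≤ m ≤ d`, and `ℤ₂`-cochains `α`, `β` on the
`d`-dimensional hypercube,
`δ(α ∪_m β) = (δα) ∪_m β + α ∪_m (δβ) + α ∪_{m−1} β + β ∪_{m−1} α`,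
as an equality of `ℤ₂`-cochains. -/
theorem cup_higher_leibniz (d m : ℕ) (hd : 1 ≤ d) (hm : 1 ≤ m) (hmd : m ≤ d)
    (α β : Cochain d) :
    delta (cup m α β) =
      cup m (delta α) β + cup m α (delta β) + cup (m - 1) α β + cup (m - 1) β α :=
  cup_higher_leibniz_general d m hm α β
end

section
/- Let d ≥ 2, let 1 ≤ i, j ≤ d, let p₁, p₂ ∈ {0,1}, and write ε₁ = (−1)^{p₁}, ε₂ = (−1)^{p₂} (identifying +1 with + and −1 with −). Let î_{ε₁} and ĵ_{ε₂} be the (d−1)-cells of the d-dimensional hypercube whose i-th (respectively j-th) entry is ε₁ (respectively ε₂) with all other entries •. If i ≠ j, then (𝟙_{î_{ε₁}} ∪_{d−2} 𝟙_{ĵ_{ε₂}} + 𝟙_{ĵ_{ε₂}} ∪_{d−2} 𝟙_{î_{ε₁}})(•,…,•) = 1 in ℤ₂ if and only if i + j + p₁ + p₂ is even; if i = j, the left-hand side equals 0. -/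
/-- The `(d−1)`-cell `î_s` whose `i`-th entry is `s` and whose other entries are all `•`. -/
def hatCell {d : ℕ} (i : Fin d) (s : Sgn) : Cell d := fun j => if j = i then s else Sgn.dot

/-- `ε(t)`: the sign `+` if `t` is even and `−` if `t` is odd. -/
def eps (t : ℕ) : Sgn := if t % 2 = 0 then Sgn.pls else Sgn.mns

/-- `α` is a `p`-cochain: it vanishes on all cells that are not `p`-cells. -/
def IsCochainOfDeg {d : ℕ} (p : ℕ) (α : Cochain d) : Prop :=
  ∀ w : Cell d, (dots w).card ≠ p → α w = 0

/-- The indicator cochain of a cell: value `1` on that cell and `0` elsewhere. -/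
def indicator {d : ℕ} (c : Cell d) : Cochain d := fun w => if w = c then 1 else 0

open Finset

theorem eps_ne_dot (t : ℕ) : eps t ≠ .dot := by
  unfold eps; split <;> simp

theorem eps_eq_eps_iff (a b : ℕ) : eps a = eps b ↔ a % 2 = b % 2 := by
  unfold eps
  rcases Nat.mod_two_eq_zero_or_one a with h | h <;>
    rcases Nat.mod_two_eq_zero_or_one b with h' | h' <;> simp [h, h']

theorem pairCond_dot_right_iff {d : ℕ} (I : Finset (Fin d)) (k : Fin d) {s : Sgn}
    (hs : s ≠ .dot) : pairCond I k s .dot ↔ s = eps #(I.filter (· < k)) := by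
  cases s <;> simp_all [pairCond, eps]

theorem pairCond_dot_left_iff {d : ℕ} (I : Finset (Fin d)) (k : Fin d) {s : Sgn}
    (hs : s ≠ .dot) : pairCond I k .dot s ↔ s = eps (#(I.filter (· < k)) + 1) := by
  cases s <;> simp_all [pairCond, eps] <;> omega

theorem not_pairCond_of_ne_dot {d : ℕ} (I : Finset (Fin d)) (k : Fin d) {a b : Sgn}
    (ha : a ≠ .dot) (hb : b ≠ .dot) : ¬ pairCond I k a b := by
  unfold pairCond
  split_ifs <;> simp [ha, hb]

open Classical in
theorem cup_indicator_apply {d : ℕ} (m : ℕ) (w c₁ c₂ : Cell d) :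
    cup m (indicator c₁) (indicator c₂) w = if IntPair m w c₁ c₂ then 1 else 0 := by
  have hprod : ∀ p : Cell d × Cell d,
      indicator c₁ p.1 * indicator c₂ p.2 = if p = (c₁, c₂) then 1 else 0 := by
    rintro ⟨a, b⟩
    simp only [indicator, Prod.mk.injEq, ite_zero_mul_ite_zero, mul_one]
  simp only [cup, hprod, sum_ite_eq', intPairs, mem_filter, mem_univ, true_and]

theorem bothDot_hatCell {d : ℕ} (i j : Fin d) {s₁ s₂ : Sgn} (h₁ : s₁ ≠ .dot)
    (h₂ : s₂ ≠ .dot) : bothDot (hatCell i s₁) (hatCell j s₂) = {i, j}ᶜ := by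
  ext k
  by_cases hi : k = i <;> by_cases hj : k = j <;> simp_all [bothDot, hatCell]

theorem card_filter_lt_compl_pair {d : ℕ} (i j : Fin d) :
    #(({i, j}ᶜ : Finset (Fin d)).filter (· < i)) = i - if j < i then 1 else 0 := by
  have hfilter : ({i, j}ᶜ : Finset (Fin d)).filter (· < i) = (Iio i).erase j := by
    ext x
    simp only [mem_filter, mem_compl, mem_insert, mem_singleton, mem_erase, mem_Iio]
    omega
  rw [hfilter, card_erase_eq_ite, Fin.card_Iio]
  split_ifs <;> simp_all

theorem intPair_topCell_hatCell_iff {d : ℕ} {i j : Fin d} (hij : i ≠ j) {s₁ s₂ : Sgn}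
    (h₁ : s₁ ≠ .dot) (h₂ : s₂ ≠ .dot) :
    IntPair (d - 2) (topCell d) (hatCell i s₁) (hatCell j s₂) ↔
      s₁ = eps (i - if j < i then 1 else 0) ∧ s₂ = eps (j - (if i < j then 1 else 0) + 1) := by
  have hcard : #({i, j}ᶜ : Finset (Fin d)) = d - 2 := by
    rw [card_compl, card_pair hij, Fintype.card_fin]
  have hℓj := card_filter_lt_compl_pair j i
  rw [pair_comm] at hℓj
  simp only [IntPair, bothDot_hatCell i j h₁ h₂, hcard, topCell, mem_compl, mem_insert,
    mem_singleton, not_not, ne_eq, not_true_eq_false, IsEmpty.forall_iff, implies_true, true_and,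
    forall_const, forall_eq_or_imp, forall_eq, hatCell, if_pos, if_neg hij, if_neg hij.symm]
  rw [pairCond_dot_right_iff _ _ h₁, pairCond_dot_left_iff _ _ h₂,
    card_filter_lt_compl_pair i j, hℓj]

theorem not_intPair_topCell_hatCell_self {d : ℕ} (m : ℕ) (i : Fin d) {s₁ s₂ : Sgn}
    (h₁ : s₁ ≠ .dot) (h₂ : s₂ ≠ .dot) :
    ¬ IntPair m (topCell d) (hatCell i s₁) (hatCell i s₂) := by
  rintro ⟨-, -, hpair⟩
  refine not_pairCond_of_ne_dot _ i ?_ ?_ (hpair i rfl ?_) <;> simp_all [bothDot, hatCell]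

theorem ite_add_ite_eq_one_iff (A B : Prop) [Decidable A] [Decidable B] :
    (if A then (1 : ZMod 2) else 0) + (if B then 1 else 0) = 1 ↔ Xor A B := by
  by_cases hA : A <;> by_cases hB : B <;> simp [hA, hB]

theorem cup_d_sub_two_indicators_general (d : ℕ) (i j : Fin d) (p₁ p₂ : ℕ) :
    (i ≠ j →
      ((cup (d - 2) (indicator (hatCell i (eps p₁))) (indicator (hatCell j (eps p₂)))
          + cup (d - 2) (indicator (hatCell j (eps p₂))) (indicator (hatCell i (eps p₁))))
          (topCell d) = 1
        ↔ Even ((i.val + 1) + (j.val + 1) + p₁ + p₂))) ∧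
    (i = j →
      (cup (d - 2) (indicator (hatCell i (eps p₁))) (indicator (hatCell j (eps p₂)))
          + cup (d - 2) (indicator (hatCell j (eps p₂))) (indicator (hatCell i (eps p₁))))
          (topCell d) = 0) := by
  have e₁ := eps_ne_dot p₁
  have e₂ := eps_ne_dot p₂
  simp only [Pi.add_apply, cup_indicator_apply]
  constructor
  · intro hij
    rw [ite_add_ite_eq_one_iff, intPair_topCell_hatCell_iff hij e₁ e₂,
      intPair_topCell_hatCell_iff hij.symm e₂ e₁]
    simp only [eps_eq_eps_iff, Nat.even_iff, xor_iff_or_and_not_and]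
    rcases hij.lt_or_gt with h | h <;> simp [h, h.not_gt] <;> omega
  · rintro rfl
    simp [not_intPair_topCell_hatCell_self _ i e₁ e₂, not_intPair_topCell_hatCell_self _ i e₂ e₁]

/-- For `d ≥ 2`, `1 ≤ i, j ≤ d` (written `1`-based as `i.val + 1`,
`j.val + 1` for `i j : Fin d`), `p₁ p₂ ∈ {0,1}` and `ε₁ = (−1)^{p₁}`, `ε₂ = (−1)^{p₂}`
(so `εᵣ = eps pᵣ`): if `i ≠ j` then
`(𝟙_{î_{ε₁}} ∪_{d−2} 𝟙_{ĵ_{ε₂}} + 𝟙_{ĵ_{ε₂}} ∪_{d−2} 𝟙_{î_{ε₁}})(•,…,•) = 1` in `ℤ₂`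
iff `i + j + p₁ + p₂` is even; and if `i = j` the left-hand side equals `0`. -/
theorem cup_d_sub_two_indicators (d : ℕ) (hd : 2 ≤ d) (i j : Fin d) (p₁ p₂ : ℕ)
    (hp₁ : p₁ ≤ 1) (hp₂ : p₂ ≤ 1) :
    (i ≠ j →
      ((cup (d - 2) (indicator (hatCell i (eps p₁))) (indicator (hatCell j (eps p₂)))
          + cup (d - 2) (indicator (hatCell j (eps p₂))) (indicator (hatCell i (eps p₁))))
          (topCell d) = 1
        ↔ Even ((i.val + 1) + (j.val + 1) + p₁ + p₂))) ∧
    (i = j →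
      (cup (d - 2) (indicator (hatCell i (eps p₁))) (indicator (hatCell j (eps p₂)))
          + cup (d - 2) (indicator (hatCell j (eps p₂))) (indicator (hatCell i (eps p₁))))
          (topCell d) = 0) :=
  cup_d_sub_two_indicators_general d i j p₁ p₂
end
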